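/- Let d ≥ 15 be odd and let v* ∈ Q_d be the vertex whose only 1-coordinate is in position 10 (i.e. v* = 0^9 1 0^{d−10}). Then the set J_1 ∪ J_2 ∪ J_3 ∪ {v*} percolates under 3-neighbour bootstrap percolation on Q_d. -/

import Mathlib

/-- A vertex of the `d`-dimensional hypercube `{0,1}^d`. -/
abbrev Cube (d : ℕ) := Fin d → Bool

/-- One step of `r`-neighbour bootstrap percolation on `Q_d`: a vertex becomes infected
if it has at least `r` infected neighbours (neighbours = Hamming distance 1). -/
noncomputable def bootStep (d r : ℕ) (A : Set (Cube d)) : Set (Cube d) :=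
  A ∪ {v | r ≤ {u : Cube d | hammingDist u v = 1 ∧ u ∈ A}.ncard}

/-- The set of infected sites at time `t`, starting from `A`. -/
noncomputable def boot (d r : ℕ) (A : Set (Cube d)) : ℕ → Set (Cube d)
  | 0 => A
  | t + 1 => bootStep d r (boot d r A t)

/-- `A` percolates: eventually every vertex is infected. -/
def Percolates (d r : ℕ) (A : Set (Cube d)) : Prop :=
  ∃ t, boot d r A t = Set.univ

/-- The percolation time of `A`: the least `t` with all sites infected. -/
noncomputable def percTime (d r : ℕ) (A : Set (Cube d)) : ℕ :=
  sInf {t | boot d r A t = Set.univ}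

/-- `M_r(d)`: the maximal percolation time over percolating subsets of `Q_d`. -/
noncomputable def maxPercTime (d r : ℕ) : ℕ :=
  sSup {T | ∃ A : Set (Cube d), Percolates d r A ∧ percTime d r A = T}

/-- The infection time `t_v` of a vertex `v`. -/
noncomputable def infTime (d r : ℕ) (A : Set (Cube d)) (v : Cube d) : ℕ :=
  sInf {t | v ∈ boot d r A t}

/-- A `k`-snake of length `T` in `Q_d`: a path `S_0, …, S_T` (consecutive vertices at
Hamming distance 1, all vertices distinct) such that `d(S_t, S_{t'}) ≥ k` whenever
`t' − t ≥ k`. -/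
def IsSnake (d k T : ℕ) (S : ℕ → Cube d) : Prop :=
  (∀ t, t < T → hammingDist (S t) (S (t + 1)) = 1) ∧
  (∀ t t', t ≤ T → t' ≤ T → S t = S t' → t = t') ∧
  (∀ t t', t' ≤ T → t + k ≤ t' → k ≤ hammingDist (S t) (S t'))

/-- `s(d)`: the maximal length of a `3`-snake in `Q_d`. -/
noncomputable def snakeMax (d : ℕ) : ℕ :=
  sSup {T | ∃ S : ℕ → Cube d, IsSnake d 3 T S}

/-- `‖x‖`: the number of `1`-coordinates of `x`. -/
def wt {d : ℕ} (x : Cube d) : ℕ := hammingDist x (fun _ => false)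

/-- The vertex of `Q_d` whose `1`-coordinates are exactly the positions in `s`
(0-indexed). -/
def ofOnes (d : ℕ) (s : Finset ℕ) : Cube d := fun i => decide (i.val ∈ s)

/-- `(b, a)`: the vertex of `Q_d` with first coordinate `b` and remaining coordinates `a`. -/
def extendCube (d : ℕ) (b : Bool) (a : Cube (d - 1)) : Cube d :=
  fun i => if h : i.val = 0 then b else a ⟨i.val - 1, by have := i.isLt; omega⟩

/-- `(y, x)`: the vertex of `Q_d` whose first `9` coordinates have `1`s exactly at the
(0-indexed) positions in `ys ⊆ {0,…,8}` and whose last `d − 9` coordinates are `x`. -/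
def embed9 (d : ℕ) (ys : Finset ℕ) (x : Cube (d - 9)) : Cube d :=
  fun i => if h : i.val < 9 then decide (i.val ∈ ys) else x ⟨i.val - 9, by have := i.isLt; omega⟩

/-- `J_1 = [1,1][*]^{d-2}`: vertices whose first two coordinates are `1`. -/
def J1 (d : ℕ) : Set (Cube d) := {x | ∀ i : Fin d, i.val < 2 → x i = true}

/-- `J_2`: the two vertices whose only `1`-coordinates are coordinate 3 together with
exactly one of coordinates 1 and 2 (1-indexed). -/
def J2 (d : ℕ) : Set (Cube d) := {ofOnes d {0, 2}, ofOnes d {1, 2}}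

/-- `J_3`: vertices with `(x_1,x_2,x_3) ∈ {(0,1,0),(1,0,0)}` whose last `d' = d-3`
coordinates form the word `0^{2l} 1 1 0^{d'-2-2l}` for some `0 ≤ l ≤ (d'-2)/2`. -/
def J3 (d : ℕ) : Set (Cube d) :=
  {x | ∃ l : ℕ, 2 * l + 2 ≤ d - 3 ∧
    (x = ofOnes d {0, 3 + 2 * l, 4 + 2 * l} ∨ x = ofOnes d {1, 3 + 2 * l, 4 + 2 * l})}

/-- The five snake conditions of Lemma 3 (for a `3`-snake of length `T` in `Q_{d''}`). -/
def SnakeConds (d'' T : ℕ) (S : ℕ → Cube d'') : Prop :=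
  S T = ofOnes d'' ∅ ∧ S (T - 1) = ofOnes d'' {0} ∧ S (T - 2) = ofOnes d'' {0, 2} ∧
  S (T - 3) = ofOnes d'' {0, 2, 4} ∧ ∀ t, t < T - 3 → 3 < wt (S t)

/-- `S^i = {S_{T-i-3j} : j ≥ 0, T-i-3j ≥ 0}`. -/
def SnakeTail (d'' T : ℕ) (S : ℕ → Cube d'') (i : ℕ) : Set (Cube d'') :=
  {x | ∃ j : ℕ, 3 * j + i ≤ T ∧ x = S (T - i - 3 * j)}

/-- `I_0`: vertices whose last `d'' = d - 9` coordinates belong to `S^i` for some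
`i ∈ {1,2,3}` and whose first `9` coordinates are all `0` except exactly one of the two
coordinates in (1-indexed) positions `2i+2` and `2i+3`, which equals `1`. -/
def I0 (d T : ℕ) (S : ℕ → Cube (d - 9)) : Set (Cube d) :=
  {v | ∃ i ∈ ({1, 2, 3} : Set ℕ), ∃ x ∈ SnakeTail (d - 9) T S i,
    v = embed9 d {2 * i + 1} x ∨ v = embed9 d {2 * i + 2} x}

/-!
Identify a vertex with its set of `1`-coordinates (0-indexed) and write `c` for either of the
coordinates `0, 1`. Every vertex containing both `0` and `1` lies in `J_1`, so it suffices to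
infect the remaining vertices. The seeds infect `{c, 9}` at time 1 (neighbours `{0,1,9} ∈ J_1`,
`v* = {9}` and `{c, 9, 10} ∈ J_3`), then `{c}` at time 2 (neighbours `{0,1}`, `{c, 2} ∈ J_2` and
`{c, 9}`), and then `∅` at time 3 (neighbours `{0}`, `{1}`, `v*`). Since `d` is odd, the pairs
`{3 + 2l, 4 + 2l}` of `J_3` partition `{3, …, d-1}`, so every `{c, i}` with `i ≥ 2` is infected
by time 3 (neighbours `{0, 1, i}`, `{c}` and the `J_3` vertex through `i`).
By induction on `|s|` with `s ⊆ {2, …, d-1}`, `{c} ∪ s` is then infected by time `|s| + 2`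
(neighbours `{0,1} ∪ s` and `{c} ∪ s ∖ {i}` for two `i ∈ s`), and `s` by time `|s| + 3`
(neighbours `{0} ∪ s`, `{1} ∪ s` and `s ∖ {i}`); so everything is infected by time `d + 3`.
-/

open Finset
open scoped symmDiff

section Bootstrap

variable {d r : ℕ} {A : Set (Cube d)}

theorem boot_mono (d r : ℕ) (A : Set (Cube d)) : Monotone (boot d r A) :=
  monotone_nat_of_le_succ fun _ => Set.subset_union_left

theorem subset_boot (t : ℕ) : A ⊆ boot d r A t :=
  boot_mono d r A t.zero_le

theorem mem_boot_succ_of_neighbours {t : ℕ} {v : Cube d} (N : Finset (Cube d)) (hN : r ≤ #N)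
    (hinf : ∀ u ∈ N, hammingDist u v = 1 ∧ u ∈ boot d r A t) :
    v ∈ boot d r A (t + 1) := by
  refine Or.inr ?_
  calc r ≤ (N : Set (Cube d)).ncard := by rwa [Set.ncard_coe_finset]
    _ ≤ _ := Set.ncard_le_ncard (fun u hu => hinf u hu) (Set.toFinite _)

end Bootstrap

namespace Finset

variable {α : Type*} [DecidableEq α] {s : Finset α} {a : α}

theorem symmDiff_singleton_of_mem (h : a ∈ s) : s ∆ {a} = s.erase a := by
  ext x
  by_cases hx : x = a <;> simp [mem_symmDiff, hx, h]

theorem symmDiff_singleton_of_notMem (h : a ∉ s) : s ∆ {a} = insert a s := by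
  ext x
  by_cases hx : x = a <;> simp [mem_symmDiff, hx, h]

end Finset

section Flips

variable {d : ℕ} {s : Finset ℕ} {k : ℕ}

theorem hammingDist_ofOnes_symmDiff_singleton (hk : k < d) :
    hammingDist (ofOnes d (s ∆ {k})) (ofOnes d s) = 1 := by
  rw [hammingDist, card_eq_one]
  refine ⟨⟨k, hk⟩, ?_⟩
  ext i
  by_cases hi : i.val = k <;> simp [ofOnes, mem_symmDiff, hi, Fin.ext_iff]

theorem ofOnes_symmDiff_singleton_ne {k' : ℕ} (hk : k < d) (hkk' : k ≠ k') :
    ofOnes d (s ∆ {k}) ≠ ofOnes d (s ∆ {k'}) := by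
  intro h
  have := congrFun h ⟨k, hk⟩
  by_cases hks : k ∈ s <;> simp_all [ofOnes, mem_symmDiff]

theorem ofOnes_mem_boot_succ_of_flips {A : Set (Cube d)} {t k₁ k₂ k₃ : ℕ}
    (hk : k₁ < d ∧ k₂ < d ∧ k₃ < d) (hne : k₁ ≠ k₂ ∧ k₁ ≠ k₃ ∧ k₂ ≠ k₃)
    (h₁ : ofOnes d (s ∆ {k₁}) ∈ boot d 3 A t) (h₂ : ofOnes d (s ∆ {k₂}) ∈ boot d 3 A t)
    (h₃ : ofOnes d (s ∆ {k₃}) ∈ boot d 3 A t) :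
    ofOnes d s ∈ boot d 3 A (t + 1) := by
  obtain ⟨hk₁, hk₂, hk₃⟩ := hk
  obtain ⟨h₁₂, h₁₃, h₂₃⟩ := hne
  refine mem_boot_succ_of_neighbours
    {ofOnes d (s ∆ {k₁}), ofOnes d (s ∆ {k₂}), ofOnes d (s ∆ {k₃})} (card_eq_three.2
      ⟨_, _, _, ofOnes_symmDiff_singleton_ne hk₁ h₁₂, ofOnes_symmDiff_singleton_ne hk₁ h₁₃,
        ofOnes_symmDiff_singleton_ne hk₂ h₂₃, rfl⟩).ge ?_
  simp only [mem_insert, mem_singleton, forall_eq_or_imp, forall_eq]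
  exact ⟨⟨hammingDist_ofOnes_symmDiff_singleton hk₁, h₁⟩,
    ⟨hammingDist_ofOnes_symmDiff_singleton hk₂, h₂⟩,
    ⟨hammingDist_ofOnes_symmDiff_singleton hk₃, h₃⟩⟩

theorem exists_ofOnes_eq (v : Cube d) : ∃ s ⊆ range d, ofOnes d s = v := by
  refine ⟨(univ.filter (v · = true)).map Fin.valEmbedding, fun i hi => ?_, ?_⟩
  · obtain ⟨j, -, rfl⟩ := mem_map.1 hi
    exact mem_range.2 j.isLt
  · ext i
    simp [ofOnes, Fin.val_inj]

end Flips

def initSet (d : ℕ) : Set (Cube d) := J1 d ∪ J2 d ∪ J3 d ∪ {ofOnes d {9}}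

section Percolation

variable {d c : ℕ}

theorem ofOnes_mem_initSet_of_zero_one {s : Finset ℕ} (h0 : 0 ∈ s) (h1 : 1 ∈ s) :
    ofOnes d s ∈ initSet d := by
  refine Or.inl (Or.inl (Or.inl fun i hi => ?_))
  obtain h | h : i.val = 0 ∨ i.val = 1 := by omega
  all_goals simp [ofOnes, h, h0, h1]

theorem ofOnes_symmDiff_one_sub_mem_initSet {s : Finset ℕ} (hc : c < 2) (hcs : c ∈ s)
    (hc's : 1 - c ∉ s) : ofOnes d (s ∆ {1 - c}) ∈ initSet d := by
  rw [symmDiff_singleton_of_notMem hc's]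
  obtain rfl | rfl : c = 0 ∨ c = 1 := by omega
  all_goals exact ofOnes_mem_initSet_of_zero_one (by simp [hcs]) (by simp [hcs])

theorem ofOnes_pair_two_mem_initSet (hc : c < 2) : ofOnes d {c, 2} ∈ initSet d := by
  obtain rfl | rfl : c = 0 ∨ c = 1 := by omega
  · exact Or.inl (Or.inl (Or.inr (Or.inl rfl)))
  · exact Or.inl (Or.inl (Or.inr (Or.inr rfl)))

theorem ofOnes_triple_mem_initSet {l : ℕ} (hc : c < 2) (hl : 2 * l + 2 ≤ d - 3) :
    ofOnes d {c, 3 + 2 * l, 4 + 2 * l} ∈ initSet d := by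
  obtain rfl | rfl : c = 0 ∨ c = 1 := by omega
  · exact Or.inl (Or.inr ⟨l, hl, Or.inl rfl⟩)
  · exact Or.inl (Or.inr ⟨l, hl, Or.inr rfl⟩)

theorem ofOnes_nine_mem_initSet : ofOnes d {9} ∈ initSet d := Or.inr rfl

theorem ofOnes_pair_nine_mem_boot (hd : 15 ≤ d) (hc : c < 2) :
    ofOnes d {c, 9} ∈ boot d 3 (initSet d) 1 := by
  refine ofOnes_mem_boot_succ_of_flips (k₁ := 1 - c) (k₂ := c) (k₃ := 10)
    (by omega) (by omega) ?_ ?_ ?_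
  · exact ofOnes_symmDiff_one_sub_mem_initSet hc (by simp) (by simp; omega)
  · rw [symmDiff_singleton_of_mem (mem_insert_self _ _), erase_insert (by simp; omega)]
    exact ofOnes_nine_mem_initSet
  · rw [symmDiff_singleton_of_notMem (by simp; omega)]
    have : ({10, c, 9} : Finset ℕ) = {c, 3 + 2 * 3, 4 + 2 * 3} := by ext; simp; omega
    exact this ▸ ofOnes_triple_mem_initSet hc (by omega)

theorem ofOnes_singleton_mem_boot (hd : 15 ≤ d) (hc : c < 2) :
    ofOnes d {c} ∈ boot d 3 (initSet d) 2 := by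
  refine ofOnes_mem_boot_succ_of_flips (k₁ := 1 - c) (k₂ := 2) (k₃ := 9)
    (by omega) (by omega) ?_ ?_ ?_
  · exact subset_boot 1 <| ofOnes_symmDiff_one_sub_mem_initSet hc (by simp) (by simp; omega)
  · rw [symmDiff_singleton_of_notMem (by simp; omega), pair_comm]
    exact subset_boot 1 (ofOnes_pair_two_mem_initSet hc)
  · rw [symmDiff_singleton_of_notMem (by simp; omega), pair_comm]
    exact ofOnes_pair_nine_mem_boot hd hc

theorem ofOnes_empty_mem_boot (hd : 15 ≤ d) : ofOnes d ∅ ∈ boot d 3 (initSet d) 3 := by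
  refine ofOnes_mem_boot_succ_of_flips (k₁ := 0) (k₂ := 1) (k₃ := 9)
    (by omega) (by omega) ?_ ?_ ?_
  all_goals rw [symmDiff_singleton_of_notMem (notMem_empty _), insert_empty]
  · exact ofOnes_singleton_mem_boot hd (by omega)
  · exact ofOnes_singleton_mem_boot hd (by omega)
  · exact subset_boot 2 ofOnes_nine_mem_initSet

theorem ofOnes_pair_mem_boot (hd : 15 ≤ d) (hodd : Odd d) (hc : c < 2) {i : ℕ}
    (hi : i ∈ Ico 2 d) : ofOnes d {c, i} ∈ boot d 3 (initSet d) 3 := by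
  rw [mem_Ico] at hi
  obtain rfl | hi3 := eq_or_lt_of_le hi.1
  · exact subset_boot 3 (ofOnes_pair_two_mem_initSet hc)
  obtain ⟨l, hl, hil⟩ : ∃ l, 2 * l + 2 ≤ d - 3 ∧ (i = 3 + 2 * l ∨ i = 4 + 2 * l) := by
    obtain ⟨m, rfl⟩ := hodd
    rcases Nat.even_or_odd i with ⟨n, rfl⟩ | ⟨n, rfl⟩
    · exact ⟨n - 2, by omega, Or.inr (by omega)⟩
    · exact ⟨n - 1, by omega, Or.inl (by omega)⟩
  obtain ⟨j, hj, hij⟩ : ∃ j ∈ Ico 2 d, j ≠ i ∧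
      ({c, i} : Finset ℕ) ∆ {j} = {c, 3 + 2 * l, 4 + 2 * l} := by
    refine ⟨if i = 3 + 2 * l then 4 + 2 * l else 3 + 2 * l, ?_, ?_, ?_⟩
    · rw [mem_Ico]; split_ifs <;> omega
    · split_ifs <;> omega
    · ext x
      split_ifs <;> simp [mem_symmDiff] <;> omega
  rw [mem_Ico] at hj
  refine ofOnes_mem_boot_succ_of_flips (k₁ := 1 - c) (k₂ := i) (k₃ := j)
    (by omega) ⟨by omega, by omega, hij.1.symm⟩ ?_ ?_ ?_
  · exact subset_boot 2 <| ofOnes_symmDiff_one_sub_mem_initSet hc (by simp) (by simp; omega)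
  · rw [symmDiff_singleton_of_mem (by simp), pair_comm, erase_insert (by simp; omega)]
    exact ofOnes_singleton_mem_boot hd hc
  · exact hij.2 ▸ subset_boot 2 (ofOnes_triple_mem_initSet hc hl)

theorem ofOnes_insert_mem_boot (hd : 15 ≤ d) (hodd : Odd d) (hc : c < 2) {s : Finset ℕ}
    (hs : s ⊆ Ico 2 d) : ofOnes d (insert c s) ∈ boot d 3 (initSet d) (#s + 2) := by
  induction s using Finset.strongInduction with | H s ih =>
  obtain rfl | hne := s.eq_empty_or_nonempty
  · exact ofOnes_singleton_mem_boot hd hc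
  obtain ⟨i, rfl⟩ | ⟨i, hi, j, hj, hij⟩ := hne.exists_eq_singleton_or_nontrivial
  · exact ofOnes_pair_mem_boot hd hodd hc (hs (mem_singleton_self i))
  have hcs : c ∉ s := fun h => by have := mem_Ico.1 (hs h); omega
  have herase : ∀ a ∈ s, ofOnes d ((insert c s) ∆ {a}) ∈ boot d 3 (initSet d) (#s + 1) := by
    intro a ha
    have hac : a ≠ c := by rintro rfl; exact hcs ha
    rw [symmDiff_singleton_of_mem (mem_insert_of_mem ha), erase_insert_of_ne hac.symm,
      ← card_erase_add_one ha]
    exact ih (s.erase a) (erase_ssubset ha) ((erase_subset a s).trans hs)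
  have hi' := mem_Ico.1 (hs hi)
  have hj' := mem_Ico.1 (hs hj)
  refine ofOnes_mem_boot_succ_of_flips (k₁ := 1 - c) (k₂ := i) (k₃ := j)
    (by omega) ⟨by omega, by omega, hij⟩ ?_ (herase i hi) (herase j hj)
  refine subset_boot _ (ofOnes_symmDiff_one_sub_mem_initSet hc (mem_insert_self c s) ?_)
  rw [mem_insert, not_or]
  exact ⟨by omega, fun h => by have := mem_Ico.1 (hs h); omega⟩

theorem ofOnes_mem_boot_of_subset_Ico (hd : 15 ≤ d) (hodd : Odd d) {s : Finset ℕ}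
    (hs : s ⊆ Ico 2 d) : ofOnes d s ∈ boot d 3 (initSet d) (#s + 3) := by
  induction s using Finset.strongInduction with | H s ih =>
  obtain rfl | ⟨i, hi⟩ := s.eq_empty_or_nonempty
  · exact ofOnes_empty_mem_boot hd
  have hi' := mem_Ico.1 (hs hi)
  have hflip : ∀ c < 2, ofOnes d (s ∆ {c}) ∈ boot d 3 (initSet d) (#s + 2) := by
    intro c hc
    rw [symmDiff_singleton_of_notMem fun h => by have := mem_Ico.1 (hs h); omega]
    exact ofOnes_insert_mem_boot hd hodd hc hs
  refine ofOnes_mem_boot_succ_of_flips (k₁ := 0) (k₂ := 1) (k₃ := i)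
    (by omega) (by omega) (hflip 0 (by omega)) (hflip 1 (by omega)) ?_
  rw [symmDiff_singleton_of_mem hi, ← card_erase_add_one hi]
  exact ih (s.erase i) (erase_ssubset hi) ((erase_subset i s).trans hs)

theorem ofOnes_mem_boot (hd : 15 ≤ d) (hodd : Odd d) {s : Finset ℕ} (hs : s ⊆ range d) :
    ofOnes d s ∈ boot d 3 (initSet d) (#s + 3) := by
  have hcases : ∀ c < 2, c ∈ s → 1 - c ∉ s → ofOnes d s ∈ boot d 3 (initSet d) (#s + 3) := by
    intro c hc hcs hc's
    have hs' : s.erase c ⊆ Ico 2 d := fun x hx => by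
      have := mem_range.1 (hs (mem_of_mem_erase hx))
      have : x ≠ c := ne_of_mem_erase hx
      have : x ≠ 1 - c := fun h => hc's (h ▸ mem_of_mem_erase hx)
      rw [mem_Ico]; omega
    have := ofOnes_insert_mem_boot hd hodd hc hs'
    rw [insert_erase hcs] at this
    exact boot_mono _ _ _ (by have := card_erase_le (s := s) (a := c); omega) this
  by_cases h0 : 0 ∈ s <;> by_cases h1 : 1 ∈ s
  · exact subset_boot _ (ofOnes_mem_initSet_of_zero_one h0 h1)
  · exact hcases 0 (by omega) h0 h1
  · exact hcases 1 (by omega) h1 h0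
  · refine ofOnes_mem_boot_of_subset_Ico hd hodd fun x hx => ?_
    have := mem_range.1 (hs hx)
    have : x ≠ 0 := fun h => h0 (h ▸ hx)
    have : x ≠ 1 := fun h => h1 (h ▸ hx)
    rw [mem_Ico]; omega

end Percolation

/-- For odd `d ≥ 15`, with `v*` the vertex whose only `1`-coordinate is
in (1-indexed) position 10, the set `J_1 ∪ J_2 ∪ J_3 ∪ {v*}` percolates under 3-neighbour
bootstrap percolation on `Q_d`. -/
theorem stmt11 (d : ℕ) (hd : 15 ≤ d) (hodd : Odd d) :
    Percolates d 3 (J1 d ∪ J2 d ∪ J3 d ∪ {ofOnes d {9}}) := by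
  refine ⟨d + 3, Set.eq_univ_of_forall fun v => ?_⟩
  obtain ⟨s, hs, rfl⟩ := exists_ofOnes_eq v
  have hcard : #s ≤ d := by simpa using card_le_card hs
  exact boot_mono _ _ _ (by omega) (ofOnes_mem_boot hd hodd hs)
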